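/- There exists a balanced 4-partite graph F_2 on 8 vertices which is 2-connected, has minimum degree at least 3, has independence number exactly 3, and does not have a Hamiltonian cycle. -/

import Mathlib

/-!
Take two non-adjacent hubs `0, 1` joined to all of `2, …, 7`, and add the matching
`2-3, 4-5, 6-7`. Deleting one vertex leaves a graph in which some hub is within distance two of
everything, so the graph is 2-connected, and every vertex has degree at least 3. The cliques
`{0, 2, 3}, {1, 4, 5}, {6, 7}` cover the vertices, so `α ≤ 3`, and `{2, 4, 6}` is independent.

A Hamiltonian cycle is a spanning 2-regular subgraph with `n` edges, at most `2|S|` of which meet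
a vertex set `S`; the others are edges of `G - S`. With `S = {0, 1}` this would need
`8 ≤ 4 + 3`.
-/

open SimpleGraph Finset

/-- `G` is a balanced `k`-partite graph: the vertex set can be partitioned into `k` parts,
each of size `|V|/k`, such that every edge joins vertices in different parts. -/
def IsBalancedKPartite {V : Type*} [Fintype V] [DecidableEq V]
    (G : SimpleGraph V) (k : ℕ) : Prop :=
  ∃ P : V → Fin k,
    (∀ i : Fin k, (Finset.univ.filter fun v => P v = i).card = Fintype.card V / k) ∧
    (∀ u v : V, G.Adj u v → P u ≠ P v)

/-- `G` is 2-connected: it has at least 3 vertices and remains connected after the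
deletion of any single vertex. -/
def TwoConnected {V : Type*} [Fintype V] (G : SimpleGraph V) : Prop :=
  3 ≤ Fintype.card V ∧ ∀ v : V, (G.induce {w | w ≠ v}).Connected

namespace SimpleGraph

variable {V : Type*}

theorem connected_of_exists_forall_eq_or_adj_or_adj_adj (H : SimpleGraph V)
    (h : ∃ c, ∀ x, x = c ∨ H.Adj c x ∨ ∃ y, H.Adj c y ∧ H.Adj y x) : H.Connected := by
  obtain ⟨c, hc⟩ := h
  refine H.connected_iff_exists_forall_reachable.2 ⟨c, fun x => ?_⟩
  rcases hc x with rfl | hcx | ⟨y, hcy, hyx⟩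
  exacts [.refl _, hcx.reachable, hcy.reachable.trans hyx.reachable]

variable [Fintype V]

theorem ncard_neighborSet_eq_degree (H : SimpleGraph V) [DecidableRel H.Adj] (v : V) :
    (H.neighborSet v).ncard = H.degree v := by
  rw [← Nat.card_coe_set_eq, Nat.card_eq_fintype_card, card_neighborSet_eq_degree]

variable [DecidableEq V]

theorem card_edgeFinset_le_sum_degree_add_card_avoiding (H : SimpleGraph V) [DecidableRel H.Adj]
    (S : Finset V) :
    #H.edgeFinset ≤ ∑ s ∈ S, H.degree s + #{e ∈ H.edgeFinset | ∀ v ∈ e, v ∉ S} := by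
  have hcover : H.edgeFinset ⊆
      (S.biUnion fun s => H.incidenceFinset s) ∪ {e ∈ H.edgeFinset | ∀ v ∈ e, v ∉ S} := by
    intro e he
    by_cases h : ∀ v ∈ e, v ∉ S
    · exact mem_union_right _ (mem_filter.2 ⟨he, h⟩)
    · push Not at h
      obtain ⟨v, hve, hvS⟩ := h
      refine mem_union_left _ (mem_biUnion.2 ⟨v, hvS, ?_⟩)
      rw [mem_incidenceFinset]
      exact ⟨mem_edgeFinset.1 he, hve⟩
  calc #H.edgeFinset
      ≤ #(S.biUnion fun s => H.incidenceFinset s) + #{e ∈ H.edgeFinset | ∀ v ∈ e, v ∉ S} :=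
        (card_le_card hcover).trans (card_union_le _ _)
    _ ≤ _ := by
      gcongr
      exact card_biUnion_le.trans_eq (sum_congr rfl fun s _ => card_incidenceFinset_eq_degree H s)

namespace Walk.IsHamiltonianCycle

variable {G : SimpleGraph V} {a : V} {p : G.Walk a a}

theorem degree_spanningCoe_toSubgraph (hp : p.IsHamiltonianCycle)
    [DecidableRel p.toSubgraph.spanningCoe.Adj] (v : V) :
    p.toSubgraph.spanningCoe.degree v = 2 := by
  rw [← ncard_neighborSet_eq_degree]
  exact hp.isCycle.ncard_neighborSet_toSubgraph_eq_two (hp.mem_support v)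

theorem card_edgeFinset_spanningCoe_toSubgraph (hp : p.IsHamiltonianCycle)
    [DecidableRel p.toSubgraph.spanningCoe.Adj] :
    #p.toSubgraph.spanningCoe.edgeFinset = Fintype.card V := by
  have := sum_degrees_eq_twice_card_edges p.toSubgraph.spanningCoe
  simp only [hp.degree_spanningCoe_toSubgraph, sum_const, card_univ, smul_eq_mul] at this
  omega

end Walk.IsHamiltonianCycle

theorem IsHamiltonian.card_le_two_mul_card_add_card_avoiding {G : SimpleGraph V}
    [DecidableRel G.Adj] (hG : G.IsHamiltonian) (hV : Fintype.card V ≠ 1) (S : Finset V) :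
    Fintype.card V ≤ 2 * #S + #{e ∈ G.edgeFinset | ∀ v ∈ e, v ∉ S} := by
  classical
  obtain ⟨a, p, hp⟩ := hG hV
  let H := p.toSubgraph.spanningCoe
  calc Fintype.card V = #H.edgeFinset := hp.card_edgeFinset_spanningCoe_toSubgraph.symm
    _ ≤ ∑ s ∈ S, H.degree s + #{e ∈ H.edgeFinset | ∀ v ∈ e, v ∉ S} :=
      card_edgeFinset_le_sum_degree_add_card_avoiding H S
    _ = 2 * #S + #{e ∈ H.edgeFinset | ∀ v ∈ e, v ∉ S} := by
      simp [H, hp.degree_spanningCoe_toSubgraph, mul_comm]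
    _ ≤ 2 * #S + #{e ∈ G.edgeFinset | ∀ v ∈ e, v ∉ S} := by
      gcongr
      exact p.toSubgraph.spanningCoe_le

end SimpleGraph

def F₂ : SimpleGraph (Fin 8) :=
  fromRel fun u v => u ≤ 1 ∧ 2 ≤ v ∨ 2 ≤ u ∧ u.val / 2 = v.val / 2

instance : DecidableRel F₂.Adj := fun u v =>
  inferInstanceAs <| Decidable <|
    u ≠ v ∧ ((u ≤ 1 ∧ 2 ≤ v ∨ 2 ≤ u ∧ u.val / 2 = v.val / 2) ∨
      (v ≤ 1 ∧ 2 ≤ u ∨ 2 ≤ v ∧ v.val / 2 = u.val / 2))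

def F₂.cliqueCover : F₂ᶜ.Coloring (Fin 3) :=
  Coloring.mk ![0, 1, 0, 0, 1, 1, 2, 2] (by decide)

theorem F₂.twoConnected : TwoConnected F₂ :=
  ⟨by simp, fun v => connected_of_exists_forall_eq_or_adj_or_adj_adj _ (by revert v; decide)⟩

theorem F₂.three_le_degree : ∀ v, 3 ≤ F₂.degree v := by decide

theorem F₂.card_le_three_of_isIndepSet {s : Finset (Fin 8)} (hs : F₂.IsIndepSet s) : #s ≤ 3 := by
  simpa using ((isClique_compl _).2 hs).card_le_of_coloring F₂.cliqueCover

theorem F₂.not_isHamiltonian : ¬ F₂.IsHamiltonian := fun hH =>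
  absurd (hH.card_le_two_mul_card_add_card_avoiding (by simp) {0, 1}) (by decide)

/-- There is a 2-connected balanced 4-partite graph `F₂` on 8 vertices with minimum degree
at least 3 and independence number exactly 3, which has no Hamiltonian cycle. -/
theorem exists_F2 :
    ∃ F : SimpleGraph (Fin 8),
      IsBalancedKPartite F 4 ∧
      TwoConnected F ∧
      (∀ v : Fin 8, 3 ≤ (F.neighborSet v).ncard) ∧
      ((∃ s : Finset (Fin 8), s.card = 3 ∧ ∀ u ∈ s, ∀ v ∈ s, u ≠ v → ¬ F.Adj u v) ∧
        ∀ s : Finset (Fin 8), (∀ u ∈ s, ∀ v ∈ s, u ≠ v → ¬ F.Adj u v) → s.card ≤ 3) ∧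
      ¬ F.IsHamiltonian :=
  ⟨F₂, ⟨![0, 0, 1, 2, 1, 3, 2, 3], by decide, by decide⟩, F₂.twoConnected,
    fun v => (ncard_neighborSet_eq_degree F₂ v).symm ▸ F₂.three_le_degree v,
    ⟨⟨{2, 4, 6}, by decide, by decide⟩,
      fun _ hs => F₂.card_le_three_of_isIndepSet fun u hu v hv => hs u hu v hv⟩,
    F₂.not_isHamiltonian⟩
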